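/- Let n, k, ℓ be natural numbers with k < ℓ ≤ n, and let p ∈ (0,1) with k ≥ n·p. If ℓ ≥ e·k·n/(n-k), then (C(n,ℓ) p^ℓ (1-p)^{n-ℓ}) / (C(n,k) p^k (1-p)^{n-k}) ≤ (e·k/ℓ)^{ℓ-k}. -/

import Mathlib

/-- Key factorial estimate: `ℓ^(ℓ-k) * k! ≤ e^(ℓ-k) * ℓ!` for `k ≤ ℓ`. -/
lemma aux_fact (k : ℕ) : ∀ ℓ : ℕ, k ≤ ℓ →
    (ℓ : ℝ) ^ (ℓ - k) * (Nat.factorial k : ℝ) ≤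
      Real.exp 1 ^ (ℓ - k) * (Nat.factorial ℓ : ℝ) := by
  intro ℓ hkℓ
  induction ℓ, hkℓ using Nat.le_induction with
  | base => simp
  | succ ℓ hkℓ ih =>
    have hsub : ℓ + 1 - k = (ℓ - k) + 1 := by omega
    rw [hsub]
    have key : ((ℓ : ℝ) + 1) ^ (ℓ - k) ≤ Real.exp 1 * (ℓ : ℝ) ^ (ℓ - k) := by
      rcases Nat.eq_zero_or_pos ℓ with h0 | hpos
      · subst h0
        have hk0 : k = 0 := by omega
        subst hk0
        simpa using Real.one_le_exp (by norm_num)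
      · have hℓ : (0:ℝ) < ℓ := by exact_mod_cast hpos
        have h1 : ((ℓ : ℝ) + 1) = (ℓ : ℝ) * (1 + 1/ℓ) := by field_simp
        rw [h1, mul_pow]
        have h2 : (1 + 1/(ℓ:ℝ)) ^ (ℓ - k) ≤ Real.exp 1 := by
          have hb : (1 + 1/(ℓ:ℝ)) ≤ Real.exp (1/ℓ) := by
            have := Real.add_one_le_exp (1/(ℓ:ℝ))
            linarith
          calc (1 + 1/(ℓ:ℝ)) ^ (ℓ - k) ≤ Real.exp (1/ℓ) ^ (ℓ - k) := by
                apply pow_le_pow_left₀ (by positivity) hb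
            _ = Real.exp ((ℓ - k : ℕ) / ℓ) := by
                rw [← Real.exp_nat_mul]; ring_nf
            _ ≤ Real.exp 1 := by
                apply Real.exp_le_exp.mpr
                rw [div_le_one hℓ]
                exact_mod_cast Nat.cast_le.mpr (Nat.sub_le ℓ k)
        calc (ℓ:ℝ) ^ (ℓ-k) * (1 + 1/(ℓ:ℝ)) ^ (ℓ - k)
            ≤ (ℓ:ℝ) ^ (ℓ-k) * Real.exp 1 := by
              apply mul_le_mul_of_nonneg_left h2 (by positivity)
          _ = Real.exp 1 * (ℓ:ℝ) ^ (ℓ-k) := by ring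
    have hfact : (Nat.factorial (ℓ+1) : ℝ) = ((ℓ:ℝ)+1) * Nat.factorial ℓ := by
      push_cast [Nat.factorial_succ]; ring
    have he : (0:ℝ) < Real.exp 1 := Real.exp_pos 1
    have hc : ((ℓ+1:ℕ):ℝ) = (ℓ:ℝ)+1 := by push_cast; ring
    rw [hc]
    calc ((ℓ:ℝ)+1) ^ ((ℓ-k)+1) * (Nat.factorial k : ℝ)
        = ((ℓ:ℝ)+1) * (((ℓ:ℝ)+1) ^ (ℓ-k) * (Nat.factorial k : ℝ)) := by
          push_cast; ring
      _ ≤ ((ℓ:ℝ)+1) * (Real.exp 1 * (ℓ:ℝ) ^ (ℓ-k) * (Nat.factorial k : ℝ)) := by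
          apply mul_le_mul_of_nonneg_left _ (by positivity)
          exact mul_le_mul_of_nonneg_right key (by positivity)
      _ ≤ ((ℓ:ℝ)+1) * (Real.exp 1 * (Real.exp 1 ^ (ℓ-k) * (Nat.factorial ℓ : ℝ))) := by
          apply mul_le_mul_of_nonneg_left _ (by positivity)
          rw [mul_assoc]
          exact mul_le_mul_of_nonneg_left ih he.le
      _ = Real.exp 1 ^ ((ℓ-k)+1) * (Nat.factorial (ℓ+1) : ℝ) := by
          rw [hfact]; ring

theorem stmt1 (n k ℓ : ℕ) (hkl : k < ℓ) (hln : ℓ ≤ n) (p : ℝ) (hp : 0 < p) (hp1 : p < 1)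
    (hk : (n : ℝ) * p ≤ k) (hl : Real.exp 1 * k * n / ((n : ℝ) - k) ≤ ℓ) :
    ((n.choose ℓ : ℝ) * p ^ ℓ * (1 - p) ^ (n - ℓ)) /
      ((n.choose k : ℝ) * p ^ k * (1 - p) ^ (n - k)) ≤
    (Real.exp 1 * k / ℓ) ^ (ℓ - k) := by
  -- basic positivity / arithmetic facts
  have hn1 : 1 ≤ n := by omega
  have hk1 : 1 ≤ k := by
    by_contra h
    have hk0 : k = 0 := by omega
    subst hk0
    have : (0:ℝ) < (n:ℝ) * p := by
      apply mul_pos _ hp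
      exact_mod_cast hn1
    simp at hk; linarith
  have hkn : k < n := lt_of_lt_of_le hkl hln
  have h1p : (0:ℝ) < 1 - p := by linarith
  have hkR : (0:ℝ) < k := by exact_mod_cast hk1
  have hℓR : (0:ℝ) < ℓ := by exact_mod_cast lt_of_le_of_lt (Nat.zero_le k) hkl
  have hnkR : (0:ℝ) < (n:ℝ) - k := by
    have : (k:ℝ) < n := by exact_mod_cast hkn
    linarith
  have he : (0:ℝ) < Real.exp 1 := Real.exp_pos 1
  set a := ℓ - k with ha
  set d := (n - k).descFactorial a with hd
  -- nat identity : choose n ℓ * ℓ! = choose n k * k! * d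
  have hnat : n.choose ℓ * Nat.factorial ℓ = n.choose k * Nat.factorial k * d := by
    have h1 : n.choose ℓ * Nat.factorial ℓ * Nat.factorial (n - ℓ) = Nat.factorial n :=
      Nat.choose_mul_factorial_mul_factorial hln
    have h2 : n.choose k * Nat.factorial k * Nat.factorial (n - k) = Nat.factorial n :=
      Nat.choose_mul_factorial_mul_factorial hkn.le
    have hale : a ≤ n - k := by omega
    have h3 : Nat.factorial (n - k - a) * d = Nat.factorial (n - k) :=
      Nat.factorial_mul_descFactorial hale
    have h4 : n - k - a = n - ℓ := by omega
    rw [h4] at h3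
    have := h1.trans h2.symm
    rw [← h3] at this
    have hpos : 0 < Nat.factorial (n - ℓ) := Nat.factorial_pos _
    apply Nat.eq_of_mul_eq_mul_right hpos
    rw [this]; ring
  -- positivity of choose and factorials over ℝ
  have hcℓ : (0:ℝ) < n.choose ℓ := by exact_mod_cast Nat.choose_pos hln
  have hck : (0:ℝ) < n.choose k := by exact_mod_cast Nat.choose_pos hkn.le
  have hfk : (0:ℝ) < Nat.factorial k := by exact_mod_cast Nat.factorial_pos k
  have hfℓ : (0:ℝ) < Nat.factorial ℓ := by exact_mod_cast Nat.factorial_pos ℓ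
  -- rewrite LHS
  have hnkdecomp : n - k = (n - ℓ) + a := by omega
  have hℓdecomp : ℓ = k + a := by omega
  have hLHS : ((n.choose ℓ : ℝ) * p ^ ℓ * (1 - p) ^ (n - ℓ)) /
      ((n.choose k : ℝ) * p ^ k * (1 - p) ^ (n - k))
      = ((d : ℝ) * Nat.factorial k / Nat.factorial ℓ) * (p / (1 - p)) ^ a := by
    have hchoose : (n.choose ℓ : ℝ) = (n.choose k : ℝ) * Nat.factorial k * d / Nat.factorial ℓ := by
      rw [eq_div_iff hfℓ.ne']
      exact_mod_cast hnat
    rw [hchoose, hnkdecomp]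
    rw [hℓdecomp, pow_add, pow_add, div_pow]
    field_simp
  rw [hLHS]
  -- bounds
  have hdle : (d : ℝ) ≤ ((n:ℝ) - k) ^ a := by
    have h1 : (d : ℝ) ≤ ((n - k : ℕ) : ℝ) ^ a := by
      exact_mod_cast Nat.descFactorial_le_pow (n - k) a
    have h2 : ((n - k : ℕ) : ℝ) = (n:ℝ) - k := by
      push_cast [Nat.cast_sub hkn.le]; ring
    rwa [h2] at h1
  have hple : p / (1 - p) ≤ (k:ℝ) / ((n:ℝ) - k) := by
    rw [div_le_div_iff₀ h1p hnkR]
    have hnR : (0:ℝ) < n := by exact_mod_cast hn1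
    nlinarith [mul_pos hp hnkR]
  have hfle : (Nat.factorial k : ℝ) / Nat.factorial ℓ ≤ Real.exp 1 ^ a / (ℓ:ℝ) ^ a := by
    rw [div_le_div_iff₀ hfℓ (by positivity)]
    have := aux_fact k ℓ hkl.le
    rw [← ha] at this
    linarith [this]
  -- combine
  have hr0 : (0:ℝ) ≤ p / (1 - p) := by positivity
  calc ((d : ℝ) * Nat.factorial k / Nat.factorial ℓ) * (p / (1 - p)) ^ a
      ≤ ((((n:ℝ) - k) ^ a) * (Real.exp 1 ^ a / (ℓ:ℝ) ^ a)) * ((k:ℝ) / ((n:ℝ) - k)) ^ a := by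
        apply mul_le_mul
        · have : (d : ℝ) * Nat.factorial k / Nat.factorial ℓ
              = (d : ℝ) * ((Nat.factorial k : ℝ) / Nat.factorial ℓ) := by ring
          rw [this]
          apply mul_le_mul hdle hfle (by positivity) (by positivity)
        · exact pow_le_pow_left₀ hr0 hple a
        · positivity
        · positivity
    _ = (Real.exp 1 * k / ℓ) ^ a := by
        rw [div_pow, div_pow, mul_pow]
        field_simp
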